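/- Let (X,G) be a G-metric space with a convex structure W, and let T : X → X be a mapping having a fixed point u (Tu = u) such that G(Tx,Ty,Tz) ≤ a·G(x,Tx,Tx) + b·G(y,Ty,Ty) + c·G(z,Tz,Tz) for all x,y,z ∈ X, where a,b,c are nonnegative real numbers with a + b + c < 1 and a < 1/2. Let (α_n) be a sequence in [0,1] with ∑_{n=0}^∞ α_n = ∞, let x_0 ∈ X, and define the Mann iterative process x_{n+1} = W(x_n, T x_n; 1−α_n, α_n). Then G(x_n, u, u) → 0 as n → ∞, i.e. (x_n) converges strongly to the fixed point u of T. -/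

import Mathlib

open Filter Topology

/-- A G-metric on a set `X` (Mustafa–Sims). The symmetry axiom (G5) is recorded via
the two generating permutations (swap of last two arguments and a cyclic shift),
from which all six equalities of (G5) follow. -/
structure GMetricStruct (X : Type*) where
  G : X → X → X → ℝ
  nonneg : ∀ x y z, 0 ≤ G x y z
  eq_zero_of_eq : ∀ x y z, x = y → y = z → G x y z = 0
  pos_of_ne : ∀ x y, x ≠ y → 0 < G x x y
  le_of_ne : ∀ x y z, z ≠ y → G x x y ≤ G x y z
  symm_swap : ∀ x y z, G x y z = G x z y
  symm_cycle : ∀ x y z, G x y z = G y z x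
  rect : ∀ x y z a, G x y z ≤ G x a a + G a y z

/-- A convex structure `W` on a G-metric space `(X, G)`:
for all `x, y, u, v` and `λ, β ∈ [0,1]` with `λ + β = 1`,
`G(W(x,y;λ,β), u, v) ≤ λ·G(x,u,v) + β·G(y,u,v)`. -/
def IsConvexStructure {X : Type*} (GM : GMetricStruct X) (W : X → X → ℝ → ℝ → X) : Prop :=
  ∀ x y u v : X, ∀ lam beta : ℝ, lam ∈ Set.Icc (0:ℝ) 1 → beta ∈ Set.Icc (0:ℝ) 1 →
    lam + beta = 1 →
    GM.G (W x y lam beta) u v ≤ lam * GM.G x u v + beta * GM.G y u v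

/-!
Putting `v` in each slot of the contractive condition and the fixed point `u` in the other
two, and averaging the three bounds, gives `G(Tv, u, u) ≤ s·G(v, Tv, Tv)` with
`s = (a+b+c)/3 < 1/3`; the rectangle inequality turns this into `G(Tv, u, u) ≤ k·G(v, u, u)`
with `k = s/(1-2s) < 1`. Convexity of `W` then yields
`G(xₙ₊₁, u, u) ≤ (1 - (1-k)αₙ)·G(xₙ, u, u)`, and since `1 - t ≤ exp(-t)` the distances are
dominated by `G(x 0, u, u)·exp(-(1-k)∑ αₖ) → 0`.
-/

theorem le_mul_exp_neg_sum_of_le_one_sub_mul {d β : ℕ → ℝ} (hd : ∀ n, 0 ≤ d n)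
    (hstep : ∀ n, d (n + 1) ≤ (1 - β n) * d n) (n : ℕ) :
    d n ≤ d 0 * Real.exp (-∑ k ∈ Finset.range n, β k) := by
  induction n with
  | zero => simp
  | succ n ih =>
    calc d (n + 1) ≤ (1 - β n) * d n := hstep n
      _ ≤ Real.exp (-β n) * d n := by
          gcongr ?_ * _
          · exact hd n
          · linarith [Real.add_one_le_exp (-β n)]
      _ ≤ Real.exp (-β n) * (d 0 * Real.exp (-∑ k ∈ Finset.range n, β k)) := by gcongr
      _ = d 0 * Real.exp (-∑ k ∈ Finset.range (n + 1), β k) := by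
          rw [Finset.sum_range_succ, neg_add, Real.exp_add]; ring

theorem tendsto_zero_of_le_one_sub_mul {d β : ℕ → ℝ} (hd : ∀ n, 0 ≤ d n)
    (hstep : ∀ n, d (n + 1) ≤ (1 - β n) * d n)
    (hβ : Tendsto (fun n => ∑ k ∈ Finset.range n, β k) atTop atTop) :
    Tendsto d atTop (𝓝 0) := by
  have hexp : Tendsto (fun n => Real.exp (-∑ k ∈ Finset.range n, β k)) atTop (𝓝 0) :=
    Real.tendsto_exp_atBot.comp (tendsto_neg_atBot_iff.mpr hβ)
  refine squeeze_zero hd (le_mul_exp_neg_sum_of_le_one_sub_mul hd hstep) ?_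
  simpa using hexp.const_mul (d 0)

namespace GMetricStruct

variable {X : Type*} (GM : GMetricStruct X)

theorem G_self (x : X) : GM.G x x x = 0 := GM.eq_zero_of_eq x x x rfl rfl

theorem G_le_two_mul_G_swap (x y : X) : GM.G x y y ≤ 2 * GM.G y x x := by
  have hrect := GM.rect y y x x
  rw [GM.symm_cycle x y x] at hrect
  rw [GM.symm_cycle x y y]
  linarith

theorem G_map_fixedPoint_le {T : X → X} {u : X} (hu : T u = u) {a b c : ℝ}
    (hT : ∀ x y z : X, GM.G (T x) (T y) (T z) ≤
      a * GM.G x (T x) (T x) + b * GM.G y (T y) (T y) + c * GM.G z (T z) (T z)) (v : X) :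
    GM.G (T v) u u ≤ (a + b + c) / 3 * GM.G v (T v) (T v) := by
  have hA := hT v u u
  have hB := hT u v u
  have hC := hT u u v
  rw [hu, GM.G_self] at hA hB hC
  rw [GM.symm_cycle u (T v) u] at hB
  rw [GM.symm_cycle u u (T v), GM.symm_cycle u (T v) u] at hC
  linarith

theorem G_map_fixedPoint_le_div {T : X → X} {u : X} {s : ℝ} (hs0 : 0 ≤ s) (hs : s < 1 / 3)
    (hT : ∀ v, GM.G (T v) u u ≤ s * GM.G v (T v) (T v)) (v : X) :
    GM.G (T v) u u ≤ s / (1 - 2 * s) * GM.G v u u := by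
  have hden : 0 < 1 - 2 * s := by linarith
  have hvTv : GM.G v (T v) (T v) ≤ GM.G v u u + 2 * GM.G (T v) u u :=
    (GM.rect v (T v) (T v) u).trans (by linarith [GM.G_le_two_mul_G_swap u (T v)])
  have key : (1 - 2 * s) * GM.G (T v) u u ≤ s * GM.G v u u := by
    nlinarith [hT v, mul_le_mul_of_nonneg_left hvTv hs0]
  rw [div_mul_eq_mul_div, le_div_iff₀ hden]
  linarith

theorem G_convex_step_le {W : X → X → ℝ → ℝ → X} (hW : IsConvexStructure GM W)
    {T : X → X} {u : X} {k : ℝ} (hT : ∀ v, GM.G (T v) u u ≤ k * GM.G v u u)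
    (v : X) {t : ℝ} (ht : t ∈ Set.Icc (0 : ℝ) 1) :
    GM.G (W v (T v) (1 - t) t) u u ≤ (1 - (1 - k) * t) * GM.G v u u := by
  have hconv := hW v (T v) u u (1 - t) t ⟨by linarith [ht.2], by linarith [ht.1]⟩ ht
    (by ring)
  nlinarith [mul_le_mul_of_nonneg_left (hT v) ht.1]

end GMetricStruct

theorem mann_convergence_three_term_general {X : Type*} (GM : GMetricStruct X)
    (W : X → X → ℝ → ℝ → X) (hW : IsConvexStructure GM W)
    (T : X → X) (u : X) (hu : T u = u)
    (a b c : ℝ) (ha : 0 ≤ a) (hb : 0 ≤ b) (hc : 0 ≤ c)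
    (habc : a + b + c < 1)
    (hT : ∀ x y z : X, GM.G (T x) (T y) (T z) ≤
      a * GM.G x (T x) (T x) + b * GM.G y (T y) (T y) + c * GM.G z (T z) (T z))
    (α : ℕ → ℝ) (hα : ∀ n, α n ∈ Set.Icc (0:ℝ) 1)
    (hdiv : Tendsto (fun n => ∑ k ∈ Finset.range n, α k) atTop atTop)
    (x : ℕ → X)
    (hrec : ∀ n, x (n + 1) = W (x n) (T (x n)) (1 - α n) (α n)) :
    Tendsto (fun n => GM.G (x n) u u) atTop (𝓝 0) := by
  set s := (a + b + c) / 3 with hs_def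
  have hs : s < 1 / 3 := by rw [hs_def]; linarith
  have hk : s / (1 - 2 * s) < 1 := by rw [div_lt_one] <;> linarith
  have hcontr := GM.G_map_fixedPoint_le_div (by positivity) hs
    (GM.G_map_fixedPoint_le hu hT)
  refine tendsto_zero_of_le_one_sub_mul (β := fun n => (1 - s / (1 - 2 * s)) * α n)
    (fun n => GM.nonneg _ _ _) (fun n => ?_) ?_
  · rw [hrec n]
    exact GM.G_convex_step_le hW hcontr (x n) (hα n)
  · simp_rw [← Finset.mul_sum]
    exact hdiv.const_mul_atTop (by linarith)

theorem mann_convergence_three_term {X : Type*} [Nonempty X] (GM : GMetricStruct X)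
    (W : X → X → ℝ → ℝ → X) (hW : IsConvexStructure GM W)
    (T : X → X) (u : X) (hu : T u = u)
    (a b c : ℝ) (ha : 0 ≤ a) (hb : 0 ≤ b) (hc : 0 ≤ c)
    (habc : a + b + c < 1) (ha2 : a < 1 / 2)
    (hT : ∀ x y z : X, GM.G (T x) (T y) (T z) ≤
      a * GM.G x (T x) (T x) + b * GM.G y (T y) (T y) + c * GM.G z (T z) (T z))
    (α : ℕ → ℝ) (hα : ∀ n, α n ∈ Set.Icc (0:ℝ) 1)
    (hdiv : Tendsto (fun n => ∑ k ∈ Finset.range n, α k) atTop atTop)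
    (x₀ : X) (x : ℕ → X) (hx0 : x 0 = x₀)
    (hrec : ∀ n, x (n + 1) = W (x n) (T (x n)) (1 - α n) (α n)) :
    Tendsto (fun n => GM.G (x n) u u) atTop (𝓝 0) :=
  mann_convergence_three_term_general GM W hW T u hu a b c ha hb hc habc hT α hα hdiv x hrec
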